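/- Let π be a dominant integral weight, w a π-minuscule element, and λ = w(π). For β ∈ R^+, let u ∈ W^π denote the minimal-length representative of the coset s_β w W_π. Then: (a) λ →β s_β(λ) holds (i.e. ⟨λ, β∨⟩ = −1) if and only if u →β w; (b) if u →β w, then u is also π-minuscule. -/

import Mathlib

open scoped Classical BigOperators

/-- A bundled setting for a finite crystallographic root system together with its
Weyl group, its action on the rational span of the weight lattice, reflections,
and the data of coefficients of roots in the basis of simple roots. -/
structure WeylSetting where
  /-- index set of the Dynkin diagram (simple roots) -/
  I : Type
  [fintypeI : Fintype I]
  [decEqI : DecidableEq I]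
  /-- rational span of the weight lattice -/
  V : Type
  [acg : AddCommGroup V]
  [mod : Module ℚ V]
  /-- the Weyl group -/
  W : Type
  [grp : Group W]
  /-- the action of the Weyl group on weights -/
  act : W →* (V ≃ₗ[ℚ] V)
  /-- the simple roots -/
  simple : I → V
  /-- the (finite) set of roots -/
  roots : Finset V
  /-- `coroot β μ` is the pairing `⟨μ, β∨⟩` -/
  coroot : V → (V →ₗ[ℚ] ℚ)
  /-- the reflection `s_β ∈ W` associated to a root `β` -/
  srefl : V → W
  /-- coefficients of a positive root in the basis of simple roots -/
  posCoeff : V → I → ℕ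
  simple_mem : ∀ i, simple i ∈ roots
  simple_indep : LinearIndependent ℚ simple
  roots_neg : ∀ β ∈ roots, -β ∈ roots
  root_pos_or_neg : ∀ β ∈ roots,
    (∃ c : I → ℚ, (∀ i, 0 ≤ c i) ∧ β = ∑ i, c i • simple i) ∨
    (∃ c : I → ℚ, (∀ i, 0 ≤ c i) ∧ -β = ∑ i, c i • simple i)
  coroot_self : ∀ β ∈ roots, coroot β β = 2
  crystallographic : ∀ β ∈ roots, ∀ γ ∈ roots, ∃ n : ℤ, coroot β γ = n
  posCoeff_spec : ∀ β ∈ roots,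
    (∃ c : I → ℚ, (∀ i, 0 ≤ c i) ∧ β = ∑ i, c i • simple i) →
    β = ∑ i, (posCoeff β i : ℚ) • simple i
  srefl_apply : ∀ β ∈ roots, ∀ v : V, act (srefl β) v = v - coroot β v • β
  act_faithful : ∀ g : W, (∀ v : V, act g v = v) → g = 1
  roots_invariant : ∀ g : W, ∀ β ∈ roots, act g β ∈ roots
  coroot_equivariant : ∀ g : W, ∀ β ∈ roots, ∀ v : V,
    coroot (act g β) (act g v) = coroot β v
  generated : ∀ g : W, ∃ l : List I, g = (l.map fun i => srefl (simple i)).prod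

namespace WeylSetting

attribute [instance] fintypeI decEqI acg mod grp

variable (D : WeylSetting)

/-- the simple reflection attached to a node of the Dynkin diagram -/
def s (i : D.I) : D.W := D.srefl (D.simple i)

/-- the product `s_{i_1} ⋯ s_{i_r}` of the simple reflections listed in `l` -/
def wordProd (l : List D.I) : D.W := (l.map D.s).prod

/-- `β` is a positive root: a root which is a nonnegative combination of simple roots -/
def IsPosRoot (β : D.V) : Prop :=
  β ∈ D.roots ∧ ∃ c : D.I → ℚ, (∀ i, 0 ≤ c i) ∧ β = ∑ i, c i • D.simple i

/-- the length of a Weyl group element -/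
noncomputable def length (g : D.W) : ℕ :=
  sInf {n | ∃ l : List D.I, l.length = n ∧ D.wordProd l = g}

/-- `l` is a reduced word for `g` -/
def IsReduced (l : List D.I) (g : D.W) : Prop :=
  D.wordProd l = g ∧ l.length = D.length g

/-- the number of reduced words of `g` -/
noncomputable def RedCard (g : D.W) : ℕ := Nat.card {l : List D.I // D.IsReduced l g}

/-- the (strong) Bruhat order on the Weyl group -/
def bruhatLE : D.W → D.W → Prop :=
  Relation.ReflTransGen
    (fun a b => (∃ β, D.IsPosRoot β ∧ b = D.srefl β * a) ∧ D.length a < D.length b)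

/-- strict (strong) Bruhat order -/
def bruhatLT (a b : D.W) : Prop := D.bruhatLE a b ∧ a ≠ b

/-- the left weak Bruhat order: `a ≤_L b` iff `ℓ(b a⁻¹) + ℓ(a) = ℓ(b)` -/
def weakLE (a b : D.W) : Prop := D.length (b * a⁻¹) + D.length a = D.length b

/-- the height of a positive root: the sum of its coefficients in the simple roots -/
noncomputable def ht (β : D.V) : ℕ := ∑ i, D.posCoeff β i

/-- an integral weight: the pairings with all positive coroots are integers -/
def IsIntegral (lam : D.V) : Prop :=
  ∀ β, D.IsPosRoot β → ∃ n : ℤ, D.coroot β lam = n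

/-- a dominant integral weight -/
def IsDominant (lam : D.V) : Prop :=
  D.IsIntegral lam ∧ ∀ i, 0 ≤ D.coroot (D.simple i) lam

/-- a pre-dominant integral weight: `⟨λ, β∨⟩ ≥ -1` for all positive roots `β` -/
def IsPreDominant (lam : D.V) : Prop :=
  D.IsIntegral lam ∧ ∀ β, D.IsPosRoot β → -1 ≤ D.coroot β lam

/-- the diagram `D(λ) = {β ∈ R⁺ : ⟨λ, β∨⟩ = -1}` of a pre-dominant weight -/
noncomputable def diagram (lam : D.V) : Finset D.V :=
  D.roots.filter fun β => D.IsPosRoot β ∧ D.coroot β lam = -1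

/-- `IsWeightPath λ [β₁, …, β_r]` says that
`λ = λ₀ →β₁ λ₁ →β₂ ⋯ →β_r λ_r` is a `λ`-path, i.e. each `β_j` is a positive
root, `⟨λ_{j-1}, β_j∨⟩ = -1` and `λ_j = s_{β_j}(λ_{j-1})`. -/
def IsWeightPath : D.V → List D.V → Prop
  | _, [] => True
  | lam, β :: rest =>
      D.IsPosRoot β ∧ D.coroot β lam = -1 ∧
        IsWeightPath (D.act (D.srefl β) lam) rest

/-- the term `1/β₁ ⋅ 1/(β₁+β₂) ⋅ … ⋅ 1/(β₁+⋯+β_r)` attached to a path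
`(β₁, …, β_r)`, computed in a field `F` via a linear embedding `emb`. -/
noncomputable def pathTerm {F : Type} [Field F] [Algebra ℚ F]
    (emb : D.V →ₗ[ℚ] F) (l : List D.V) : F :=
  ∏ j ∈ Finset.range l.length, (emb ((l.take (j + 1)).sum))⁻¹

/-- `w` is a π-minuscule element (in the sense of Peterson). -/
def IsMinuscule (pi : D.V) (w : D.W) : Prop :=
  ∃ l : List D.I, D.IsReduced l w ∧
    ∀ k : Fin l.length,
      D.coroot (D.simple (l.get k)) (D.act (D.wordProd (l.drop (k.val + 1))) pi) = 1

/-- the stabilizer `W_π = Stab_W(π)` of a weight -/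
def stab (pi : D.V) : Subgroup D.W where
  carrier := {g | D.act g pi = pi}
  one_mem' := by simp
  mul_mem' := by
    intro a b ha hb
    simp only [Set.mem_setOf_eq] at *
    calc D.act (a * b) pi = D.act a (D.act b pi) := by rw [map_mul]; rfl
    _ = pi := by rw [hb, ha]
  inv_mem' := by
    intro a ha
    simp only [Set.mem_setOf_eq] at *
    calc D.act a⁻¹ pi = D.act a⁻¹ (D.act a pi) := by rw [ha]
    _ = D.act (a⁻¹ * a) pi := by rw [map_mul]; rfl
    _ = pi := by simp

/-- `u` is the minimal-length representative of its coset `uH` -/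
def IsMinRep (H : Subgroup D.W) (u : D.W) : Prop :=
  ∀ g : D.W, u⁻¹ * g ∈ H → D.length u ≤ D.length g

/-- `a` and `b` lie in the same coset of `H`, i.e. `aH = bH` -/
def SameCoset (H : Subgroup D.W) (a b : D.W) : Prop := a⁻¹ * b ∈ H

/-- `u →β w` in `W^P`: `β` is a positive root, `u, w` are minimal-length
representatives, `s_β w H = u H`, and `u < w` in Bruhat order -/
def Arrow (H : Subgroup D.W) (u w : D.W) (β : D.V) : Prop :=
  D.IsPosRoot β ∧ D.IsMinRep H u ∧ D.IsMinRep H w ∧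
    D.SameCoset H (D.srefl β * w) u ∧ D.bruhatLT u w

/-- `ArrowPath H w [β₁, …, β_r]` encodes a directed path
`x_r →β_r ⋯ → x_1 →β₁ x_0 = w` in the Bruhat graph on `W^P`. -/
def ArrowPath (H : Subgroup D.W) : D.W → List D.V → Prop
  | _, [] => True
  | w, β :: rest => ∃ u, D.Arrow H u w β ∧ ArrowPath H u rest

/-- directed paths as above whose vertices all lie above `v` in Bruhat order -/
def ArrowPathGE (H : Subgroup D.W) (v : D.W) : D.W → List D.V → Prop
  | _, [] => True
  | w, β :: rest => ∃ u, D.Arrow H u w β ∧ D.bruhatLE v u ∧ ArrowPathGE H v u rest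

/-- directed paths from `u` to `w`:
`u = x_r →β_r ⋯ → x_1 →β₁ x_0 = w` encoded by the list `[β₁, …, β_r]`. -/
def ArrowPathFromTo (H : Subgroup D.W) (u : D.W) : D.W → List D.V → Prop
  | w, [] => u = w
  | w, β :: rest => ∃ x, D.Arrow H x w β ∧ ArrowPathFromTo H u x rest

/-- `S(w) = {β ∈ R⁺ : s_β w < w}` -/
noncomputable def Sset (w : D.W) : Finset D.V :=
  D.roots.filter fun β => D.IsPosRoot β ∧ D.bruhatLT (D.srefl β * w) w

/-- `S(w/v) = {β ∈ R⁺ : v ≤ s_β w < w}` -/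
noncomputable def SsetSkew (v w : D.W) : Finset D.V :=
  D.roots.filter fun β =>
    D.IsPosRoot β ∧ D.bruhatLE v (D.srefl β * w) ∧ D.bruhatLT (D.srefl β * w) w

/-- an oriented edge `x → y` in the Bruhat graph of `G/P`: `x, y` are minimal
representatives, `xH < yH`, and `yH = x s_γ H` for some positive root `γ` -/
def GEdge (H : Subgroup D.W) (x y : D.W) : Prop :=
  D.IsMinRep H x ∧ D.IsMinRep H y ∧ D.bruhatLT x y ∧
    ∃ γ, D.IsPosRoot γ ∧ D.SameCoset H (x * D.srefl γ) y

/-- the (unique) positive root `γ` with `yH = x s_γ H` attached to an edge -/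
noncomputable def edgeRoot (H : Subgroup D.W) (x y : D.W) : D.V :=
  if h : ∃ γ, D.IsPosRoot γ ∧ D.SameCoset H (x * D.srefl γ) y then h.choose else 0

/-- `GChainTo H v t [x₁, …, x_r]` encodes a directed path
`v ≤ x_r → ⋯ → x_1 → x_0 = t` in the Bruhat graph of `G/P` -/
def GChainTo (H : Subgroup D.W) (v : D.W) : D.W → List D.W → Prop
  | _, [] => True
  | t, x :: rest => D.GEdge H x t ∧ D.bruhatLE v x ∧ GChainTo H v x rest

/-- the weighted term
`(m_Λ(x_r,x_{r-1})/W_Λ(x_r)) ⋯ (m_Λ(x_1,x_0)/W_Λ(x_1))` of a path in the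
`Λ`-Bruhat graph, computed in a field `F` via a linear embedding `emb`. -/
noncomputable def chainTerm {F : Type} [Field F] [Algebra ℚ F]
    (emb : D.V →ₗ[ℚ] F) (H : Subgroup D.W) (Lam : D.W → D.V) (w : D.W) :
    D.W → List D.W → F
  | _, [] => 1
  | t, x :: rest =>
      algebraMap ℚ F (D.coroot (D.edgeRoot H x t) (Lam x)) *
        (emb (D.act x (Lam x) - D.act w (Lam x)))⁻¹ *
        chainTerm emb H Lam w x rest

/-- the Bruhat order on cosets: `aH ≤ bH` -/
def cosetLE (H : Subgroup D.W) (a b : D.W) : Prop :=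
  ∃ x y, D.SameCoset H a x ∧ D.SameCoset H b y ∧ D.bruhatLE x y

/-- the (standard) parabolic subgroup generated by simple reflections in `J` -/
def parab (J : Set D.I) : Subgroup D.W := Subgroup.closure (D.s '' J)

/-- `X*(T)_P`: integral weights orthogonal to all coroots of `W_P`,
i.e. to `γ∨` for all positive roots `γ` in the span of the simple roots of `P` -/
def OrthWeightP (J : Set D.I) (lam : D.V) : Prop :=
  D.IsIntegral lam ∧
    ∀ γ, D.IsPosRoot γ → γ ∈ Submodule.span ℚ (D.simple '' J) → D.coroot γ lam = 0

/-- an admissible function `Λ : [v,w]^P → X*(T)_P` -/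
def Admissible (J : Set D.I) (v w : D.W) (Lam : D.W → D.V) : Prop :=
  (∀ x, D.IsMinRep (D.parab J) x → D.bruhatLE v x → D.bruhatLE x w →
      D.OrthWeightP J (Lam x)) ∧
  (∀ x, D.IsMinRep (D.parab J) x → D.bruhatLE v x → D.bruhatLE x w → x ≠ w →
      D.act x (Lam x) ≠ D.act w (Lam x))

/-- the subword of `l` with letters at the positions in `S`, in increasing order -/
def subwordF (l : List D.I) (S : Finset (Fin l.length)) : List D.I :=
  ((List.finRange l.length).filter fun j => j ∈ S).map l.get

/-- `β_j = s_{i_1} ⋯ s_{i_{j-1}}(α_{i_j})` attached to a reduced word `l` -/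
noncomputable def refRoot (l : List D.I) (j : Fin l.length) : D.V :=
  D.act (D.wordProd (l.take j.val)) (D.simple (l.get j))

/-- the Weyl group is simply laced: the Cartan pairing is symmetric -/
def SimplyLaced : Prop :=
  ∀ i j, D.coroot (D.simple i) (D.simple j) = D.coroot (D.simple j) (D.simple i)

/-- generating relation of the heap order of the word `l`:
`p_j < p_k` whenever `j < k` and `s_{i_j}`, `s_{i_k}` do not commute -/
def heapCovers (l : List D.I) (j k : Fin l.length) : Prop :=
  (j : ℕ) < (k : ℕ) ∧ D.s (l.get j) * D.s (l.get k) ≠ D.s (l.get k) * D.s (l.get j)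

/-- the heap order of the word `l`: the minimal partial order generated by
`heapCovers` -/
def heapLE (l : List D.I) : Fin l.length → Fin l.length → Prop :=
  Relation.ReflTransGen (D.heapCovers l)

/-- strict heap order -/
def heapLT (l : List D.I) (j k : Fin l.length) : Prop := D.heapLE l j k ∧ j ≠ k

/-- `F` is an order filter of the heap `H(w)` of the word `l` -/
def IsHeapFilter (l : List D.I) (F : Finset (Fin l.length)) : Prop :=
  ∀ j k, j ∈ F → D.heapLE l j k → k ∈ F

/-- `i` and `j` are joined by an edge of the Dynkin diagram -/
def adjDynkin (i j : D.I) : Prop := i ≠ j ∧ D.s i * D.s j ≠ D.s j * D.s i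

/-- an elementary excitation `A ▷ B` of subsets of the heap of the word `l` -/
def Excite (l : List D.I) (A B : Finset (Fin l.length)) : Prop :=
  ∃ p q, D.heapLT l p q ∧ l.get p = l.get q ∧ q ∈ A ∧ p ∈ B ∧
    A.erase q = B.erase p ∧
    (∀ z, D.heapLT l p z → D.heapLT l z q → l.get z ≠ l.get p) ∧
    ∀ u ∈ A, D.heapLE l p u → D.heapLE l u q → ¬ D.adjDynkin (l.get p) (l.get u)

/-- `A` is an excited diagram of `F` in the heap of the word `l`,
i.e. `A ∈ E_{H(w)}(F)` -/
def InExcited (l : List D.I) (F A : Finset (Fin l.length)) : Prop :=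
  Relation.ReflTransGen (D.Excite l) F A

end WeylSetting

/-!
Write `λ = w π` for a π-minuscule `w = s_{i_1} ⋯ s_{i_ℓ}`. Such a weight is pre-dominant
(`⟨λ, β∨⟩ ≥ -1` for `β > 0`), and `w` is the unique shortest element sending `π` to `λ`.
If `⟨λ, β∨⟩ = -1`, induction on the height of `β` produces a π-minuscule word for
`s_β λ = λ + β` lying below `w` in Bruhat order, interleaving simple steps `λ ↦ s_j λ` with
the inductive step for `s_j β`; this word is then the minimal representative `u`.
Conversely, the height of `π - x π` grows along the Bruhat order, so `u < w` forces
`⟨λ, β∨⟩ ≤ 0`, while `⟨λ, β∨⟩ = 0` would put `u` in the coset of `w`.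
-/

namespace WeylSetting

variable {D : WeylSetting}

@[simp]
lemma act_mul_apply (a b : D.W) (v : D.V) : D.act (a * b) v = D.act a (D.act b v) := by
  rw [map_mul]; rfl

@[simp]
lemma act_one_apply (v : D.V) : D.act 1 v = v := by
  rw [map_one]; rfl

@[simp]
lemma act_inv_act (g : D.W) (v : D.V) : D.act g⁻¹ (D.act g v) = v := by
  rw [← act_mul_apply, inv_mul_cancel, act_one_apply]

@[simp]
lemma act_act_inv (g : D.W) (v : D.V) : D.act g (D.act g⁻¹ v) = v := by
  rw [← act_mul_apply, mul_inv_cancel, act_one_apply]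

lemma act_ext {g h : D.W} (H : ∀ v, D.act g v = D.act h v) : g = h := by
  have : h⁻¹ * g = 1 := D.act_faithful _ fun v => by rw [act_mul_apply, H, act_inv_act]
  rwa [inv_mul_eq_one, eq_comm] at this

lemma root_ne_zero {β : D.V} (hβ : β ∈ D.roots) : β ≠ 0 := by
  rintro rfl
  simpa using D.coroot_self 0 hβ

lemma coroot_act (g : D.W) {β : D.V} (hβ : β ∈ D.roots) (v : D.V) :
    D.coroot β (D.act g v) = D.coroot (D.act g⁻¹ β) v := by
  simpa using (D.coroot_equivariant g⁻¹ β hβ (D.act g v)).symm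

lemma srefl_apply_self {β : D.V} (hβ : β ∈ D.roots) : D.act (D.srefl β) β = -β := by
  rw [D.srefl_apply β hβ, D.coroot_self β hβ]
  module

@[simp]
lemma srefl_srefl_apply {β : D.V} (hβ : β ∈ D.roots) (v : D.V) :
    D.act (D.srefl β) (D.act (D.srefl β) v) = v := by
  simp only [D.srefl_apply β hβ, map_sub, map_smul, D.coroot_self β hβ, smul_eq_mul]
  module

lemma coroot_srefl_apply {β : D.V} (hβ : β ∈ D.roots) (v : D.V) :
    D.coroot β (D.act (D.srefl β) v) = -D.coroot β v := by
  rw [D.srefl_apply β hβ, map_sub, map_smul, D.coroot_self β hβ, smul_eq_mul]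
  ring

lemma srefl_mul_self {β : D.V} (hβ : β ∈ D.roots) : D.srefl β * D.srefl β = 1 :=
  act_ext fun v => by simp [hβ]

lemma coroot_neg {β : D.V} (hβ : β ∈ D.roots) (v : D.V) :
    D.coroot (-β) v = -D.coroot β v := by
  have h := D.coroot_equivariant (D.srefl β) β hβ (D.act (D.srefl β) v)
  rw [srefl_apply_self hβ, srefl_srefl_apply hβ] at h
  rw [h, D.srefl_apply β hβ, map_sub, map_smul, D.coroot_self β hβ, smul_eq_mul]
  ring

lemma srefl_neg {β : D.V} (hβ : β ∈ D.roots) : D.srefl (-β) = D.srefl β :=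
  act_ext fun v => by
    rw [D.srefl_apply _ (D.roots_neg β hβ), D.srefl_apply β hβ, coroot_neg hβ, neg_smul_neg]

lemma srefl_conj (g : D.W) {β : D.V} (hβ : β ∈ D.roots) :
    D.srefl (D.act g β) = g * D.srefl β * g⁻¹ :=
  act_ext fun v => by
    rw [D.srefl_apply _ (D.roots_invariant g β hβ), act_mul_apply, act_mul_apply,
      D.srefl_apply β hβ, map_sub, map_smul, act_act_inv]
    congr 2
    simpa using D.coroot_equivariant g β hβ (D.act g⁻¹ v)

/-- Root systems here may be non-reduced. Both `s_β` and `s_{cβ}` send `β` to `-β`, so `(-β)∨`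
is invariant under both, and it detects the `β`-component of `s_{cβ} v - s_β v`. -/
lemma coroot_smul {β : D.V} (hβ : β ∈ D.roots) {c : ℚ} (hc : c ≠ 0) (hcβ : c • β ∈ D.roots)
    (v : D.V) : D.coroot (c • β) v = c⁻¹ * D.coroot β v := by
  have hβc : D.coroot (c • β) β = 2 / c := by
    rw [eq_div_iff hc, mul_comm, ← smul_eq_mul, ← map_smul, D.coroot_self _ hcβ]
  have hflip : D.act (D.srefl (c • β)) β = -β := by
    rw [D.srefl_apply _ hcβ, hβc, smul_smul, div_mul_cancel₀ _ hc]
    module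
  have hinv : ∀ g : D.W, D.act g β = -β → ∀ u, D.coroot (-β) (D.act g u) = D.coroot β u :=
    fun g hg u => by rw [← hg, D.coroot_equivariant g β hβ]
  have hzero := congrArg₂ (· - ·) (hinv _ hflip v) (hinv _ (srefl_apply_self hβ) v)
  simp only [sub_self, D.srefl_apply _ hcβ, D.srefl_apply β hβ, coroot_neg hβ, map_sub,
    map_smul, smul_eq_mul, D.coroot_self β hβ] at hzero
  field_simp
  linear_combination hzero / 2

lemma srefl_smul {β : D.V} (hβ : β ∈ D.roots) {c : ℚ} (hc : c ≠ 0) (hcβ : c • β ∈ D.roots) :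
    D.srefl (c • β) = D.srefl β :=
  act_ext fun v => by
    rw [D.srefl_apply _ hcβ, D.srefl_apply β hβ, coroot_smul hβ hc hcβ, smul_smul]
    congr 2
    field_simp

lemma isPosRoot_or_isPosRoot_neg {β : D.V} (hβ : β ∈ D.roots) :
    D.IsPosRoot β ∨ D.IsPosRoot (-β) :=
  (D.root_pos_or_neg β hβ).imp (⟨hβ, ·⟩) (⟨D.roots_neg β hβ, ·⟩)

lemma isPosRoot_simple (i : D.I) : D.IsPosRoot (D.simple i) :=
  ⟨D.simple_mem i, Pi.single i 1, fun k => by by_cases h : k = i <;> simp [h],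
    by simp [Pi.single_apply, ite_smul]⟩

lemma eq_of_sum_smul_simple {f g : D.I → ℚ}
    (h : ∑ i, f i • D.simple i = ∑ i, g i • D.simple i) : f = g :=
  funext (Fintype.linearIndependent_iffₛ.mp D.simple_indep f g h)

lemma sum_ite_smul_simple (i : D.I) (c : ℚ) :
    ∑ k, (if k = i then c else 0) • D.simple k = c • D.simple i := by
  simp [ite_smul]

lemma coeff_nonneg_or_nonpos {β : D.V} (hβ : β ∈ D.roots) {c : D.I → ℚ}
    (hc : β = ∑ i, c i • D.simple i) : (∀ i, 0 ≤ c i) ∨ ∀ i, c i ≤ 0 := by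
  rcases D.root_pos_or_neg β hβ with ⟨c', hc', h⟩ | ⟨c', hc', h⟩
  · exact Or.inl fun i => by rw [eq_of_sum_smul_simple (hc.symm.trans h)]; exact hc' i
  · refine Or.inr fun i => ?_
    have : -c = c' := eq_of_sum_smul_simple <| by simp [neg_smul, ← h, hc]
    have hi := congrFun this i
    rw [Pi.neg_apply] at hi
    linarith [hc' i]

lemma isPosRoot_s_apply {β : D.V} (hβ : D.IsPosRoot β) {i : D.I}
    (hne : ¬∃ q : ℚ, 0 < q ∧ β = q • D.simple i) : D.IsPosRoot (D.act (D.s i) β) := by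
  obtain ⟨hmem, c, hc, rfl⟩ := hβ
  have hrep : D.act (D.s i) (∑ k, c k • D.simple k) = ∑ k,
      (c k - if k = i then D.coroot (D.simple i) (∑ k, c k • D.simple k) else 0) • D.simple k := by
    rw [s, D.srefl_apply _ (D.simple_mem i)]
    simp [sub_smul, ite_smul]
  rcases coeff_nonneg_or_nonpos (D.roots_invariant _ _ hmem) hrep with h | h
  · exact ⟨D.roots_invariant _ _ hmem, _, h, hrep⟩
  · have hzero : ∀ k, k ≠ i → c k = 0 := fun k hk => by
      have := h k
      rw [if_neg hk, sub_zero] at this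
      exact le_antisymm this (hc k)
    have hsingle : ∑ k, c k • D.simple k = c i • D.simple i :=
      Finset.sum_eq_single i (fun k _ hk => by rw [hzero k hk, zero_smul]) (by simp)
    refine absurd ⟨c i, lt_of_le_of_ne (hc i) fun h0 => ?_, hsingle⟩ hne
    exact root_ne_zero hmem (by rw [hsingle, ← h0, zero_smul])

lemma coroot_simple_nonpos {i j : D.I} (hij : i ≠ j) :
    D.coroot (D.simple j) (D.simple i) ≤ 0 := by
  have hrep : D.act (D.s j) (D.simple i) = ∑ k,
      ((if k = i then 1 else 0) - if k = j then D.coroot (D.simple j) (D.simple i) else 0) •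
        D.simple k := by
    rw [s, D.srefl_apply _ (D.simple_mem j)]
    simp [sub_smul, ite_smul]
  rcases coeff_nonneg_or_nonpos (D.roots_invariant _ _ (D.simple_mem i)) hrep with h | h
  · simpa [Ne.symm hij] using h j
  · have := h i
    norm_num [hij] at this

lemma one_le_of_isPosRoot_smul_simple {q : ℚ} {i : D.I} (hβ : D.IsPosRoot (q • D.simple i))
    (hq : 0 < q) : 1 ≤ q := by
  have h := congrFun (eq_of_sum_smul_simple
    ((sum_ite_smul_simple i q).trans (D.posCoeff_spec _ hβ.1 hβ.2))) i
  simp only [if_true] at h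
  rw [h] at hq ⊢
  exact_mod_cast Nat.one_le_iff_ne_zero.mpr (by exact_mod_cast hq.ne')

lemma exists_coroot_simple_pos {β : D.V} (hβ : D.IsPosRoot β) :
    ∃ j, 0 < D.coroot β (D.simple j) := by
  obtain ⟨hmem, c, hc, hrep⟩ := hβ
  have h2 : D.coroot β (∑ j, c j • D.simple j) = 2 := by
    rw [← hrep]
    exact D.coroot_self β hmem
  simp only [map_sum, map_smul, smul_eq_mul] at h2
  by_contra! h
  have := Finset.sum_nonpos fun j (_ : j ∈ Finset.univ) =>
    mul_nonpos_of_nonneg_of_nonpos (hc j) (h j)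
  linarith

lemma linearIndepOn_range_simple (D : WeylSetting) : LinearIndepOn ℚ id (Set.range D.simple) :=
  (linearIndepOn_id_range_iff D.simple_indep.injective).mpr D.simple_indep

/-- The height of roots, extended linearly to `V` (arbitrarily off the span of the simple
roots). -/
noncomputable def htQ (D : WeylSetting) : D.V →ₗ[ℚ] ℚ :=
  (Module.Basis.extend D.linearIndepOn_range_simple).sumCoords

@[simp]
lemma htQ_simple (i : D.I) : D.htQ (D.simple i) = 1 := by
  have := Module.Basis.sumCoords_self_apply (b := Module.Basis.extend _)
    (i := ⟨D.simple i, Module.Basis.subset_extend D.linearIndepOn_range_simple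
      (Set.mem_range_self i)⟩)
  rwa [Module.Basis.extend_apply_self] at this

lemma htQ_eq_ht {β : D.V} (hβ : D.IsPosRoot β) : D.htQ β = D.ht β := by
  conv_lhs => rw [D.posCoeff_spec β hβ.1 hβ.2]
  simp [ht]

lemma ht_pos {β : D.V} (hβ : D.IsPosRoot β) : 0 < D.ht β := by
  refine Nat.pos_of_ne_zero fun h => root_ne_zero hβ.1 ?_
  rw [ht, Finset.sum_eq_zero_iff] at h
  rw [D.posCoeff_spec β hβ.1 hβ.2]
  simp [h]

lemma htQ_pos {β : D.V} (hβ : D.IsPosRoot β) : 0 < D.htQ β := by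
  rw [htQ_eq_ht hβ]
  exact_mod_cast ht_pos hβ

lemma not_isPosRoot_neg {β : D.V} (hβ : D.IsPosRoot β) : ¬D.IsPosRoot (-β) := fun h => by
  linarith [htQ_pos h, htQ_pos hβ, map_neg D.htQ β]

/-- If `⟨γ, β∨⟩ > 0` but `⟨β, γ∨⟩ ≤ 0`, then along the orbit of `γ` under `-s_β s_γ` the
pairing with `β∨` strictly decreases, producing infinitely many roots. -/
theorem coroot_pos_symm {β γ : D.V} (hβ : β ∈ D.roots) (hγ : γ ∈ D.roots)
    (h : 0 < D.coroot β γ) : 0 < D.coroot γ β := by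
  by_contra! hm
  set f : D.V → D.V := fun x => -D.act (D.srefl β * D.srefl γ) x with hf
  have hroot : ∀ n, f^[n] γ ∈ D.roots := fun n => by
    induction n with
    | zero => exact hγ
    | succ n ih =>
      rw [Function.iterate_succ_apply']
      exact D.roots_neg _ (D.roots_invariant _ _ ih)
  have hβf : ∀ x, D.coroot β (f x) = D.coroot β x - D.coroot γ x * D.coroot β γ := fun x => by
    simp [hf, D.srefl_apply β hβ, D.srefl_apply γ hγ, D.coroot_self β hβ]
    ring
  have hγf : ∀ x, D.coroot γ (f x) = D.coroot γ x + D.coroot β (f x) * D.coroot γ β := fun x => by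
    rw [hβf]
    simp [hf, D.srefl_apply β hβ, D.srefl_apply γ hγ, D.coroot_self γ hγ]
    ring
  have hinv : ∀ n, 2 ≤ D.coroot γ (f^[n] γ) ∧ D.coroot β (f^[n] γ) ≤ D.coroot β γ := fun n => by
    induction n with
    | zero => simp [D.coroot_self γ hγ]
    | succ n ih =>
      obtain ⟨hr, hp⟩ := ih
      have hp' : D.coroot β (f^[n] γ) - D.coroot γ (f^[n] γ) * D.coroot β γ ≤ 0 := by nlinarith
      rw [Function.iterate_succ_apply', hγf, hβf]
      exact ⟨by nlinarith [mul_nonneg_of_nonpos_of_nonpos hp' hm], by linarith⟩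
  have hanti : StrictAnti fun n => D.coroot β (f^[n] γ) :=
    strictAnti_nat_of_succ_lt fun n => by
      simp only [Function.iterate_succ_apply', hβf]
      nlinarith [hinv n]
  exact Set.infinite_range_of_injective (hanti.injective.of_comp (f := D.coroot β))
    (D.roots.finite_toSet.subset (Set.range_subset_iff.mpr hroot))

theorem coroot_neg_symm {β γ : D.V} (hβ : β ∈ D.roots) (hγ : γ ∈ D.roots)
    (h : D.coroot β γ < 0) : D.coroot γ β < 0 := by
  have := coroot_pos_symm hβ (D.roots_neg γ hγ) (by rw [map_neg]; linarith)
  rw [coroot_neg hγ] at this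
  linarith

lemma coroot_simple_eq_zero_symm {i j : D.I} (hij : i ≠ j)
    (h : D.coroot (D.simple j) (D.simple i) = 0) : D.coroot (D.simple i) (D.simple j) = 0 :=
  le_antisymm (coroot_simple_nonpos hij.symm) <| not_lt.mp fun hlt =>
    (coroot_neg_symm (D.simple_mem i) (D.simple_mem j) hlt).ne h

lemma s_mul_comm {i j : D.I} (hij : D.coroot (D.simple j) (D.simple i) = 0)
    (hji : D.coroot (D.simple i) (D.simple j) = 0) : D.s i * D.s j = D.s j * D.s i :=
  act_ext fun v => by
    simp only [act_mul_apply, s, D.srefl_apply _ (D.simple_mem i),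
      D.srefl_apply _ (D.simple_mem j), map_sub, map_smul, hij, hji, smul_eq_mul, mul_zero,
      sub_zero]
    abel

@[simp]
lemma wordProd_nil : D.wordProd [] = 1 := rfl

@[simp]
lemma wordProd_cons (i : D.I) (t : List D.I) : D.wordProd (i :: t) = D.s i * D.wordProd t := by
  simp [wordProd]

lemma wordProd_append (l₁ l₂ : List D.I) :
    D.wordProd (l₁ ++ l₂) = D.wordProd l₁ * D.wordProd l₂ := by
  simp [wordProd]

lemma s_mul_self (i : D.I) : D.s i * D.s i = 1 := srefl_mul_self (D.simple_mem i)

@[simp]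
lemma s_s_apply (i : D.I) (v : D.V) : D.act (D.s i) (D.act (D.s i) v) = v :=
  srefl_srefl_apply (D.simple_mem i) v

lemma length_le {g : D.W} {l : List D.I} (h : D.wordProd l = g) : D.length g ≤ l.length :=
  Nat.sInf_le ⟨l, rfl, h⟩

lemma exists_reduced (g : D.W) : ∃ l : List D.I, l.length = D.length g ∧ D.wordProd l = g :=
  Nat.sInf_mem (s := {n | ∃ l : List D.I, l.length = n ∧ D.wordProd l = g}) <| by
    obtain ⟨l, hl⟩ := D.generated g
    exact ⟨l.length, l, rfl, hl.symm⟩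

lemma eq_one_of_length_eq_zero {g : D.W} (h : D.length g = 0) : g = 1 := by
  obtain ⟨l, hl, rfl⟩ := exists_reduced g
  rw [h, List.length_eq_zero_iff] at hl
  simp [hl]

lemma length_le_length_s_mul (i : D.I) (g : D.W) : D.length g ≤ D.length (D.s i * g) + 1 := by
  obtain ⟨l, hl, hw⟩ := exists_reduced (D.s i * g)
  have : D.wordProd (i :: l) = g := by rw [wordProd_cons, hw, ← mul_assoc, s_mul_self, one_mul]
  simpa [hl] using length_le this

/-- Reading the word from the right, at the letter `s_i` where `δ` stops being positive it has
become a multiple of `α_i`; deleting that letter gives `w s_δ`. -/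
lemma exists_shorter_word {δ : D.V} (hδ : D.IsPosRoot δ) : ∀ {l : List D.I},
    ¬D.IsPosRoot (D.act (D.wordProd l) δ) →
      ∃ l' : List D.I, l'.length < l.length ∧ D.wordProd l' = D.wordProd l * D.srefl δ
  | [], h => absurd (by simpa using hδ) h
  | i :: t, h => by
    by_cases ht : D.IsPosRoot (D.act (D.wordProd t) δ)
    · obtain ⟨q, hq, heq⟩ : ∃ q : ℚ, 0 < q ∧ D.act (D.wordProd t) δ = q • D.simple i := by
        by_contra hne
        exact h (by simpa using isPosRoot_s_apply ht hne)
      have hconj : D.wordProd t * D.srefl δ = D.s i * D.wordProd t := by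
        have := srefl_conj (D.wordProd t) hδ.1
        rw [heq, srefl_smul (D.simple_mem i) hq.ne' (heq ▸ ht.1)] at this
        rw [s, this]
        group
      exact ⟨t, by simp, by rw [wordProd_cons, mul_assoc, hconj, ← mul_assoc, s_mul_self, one_mul]⟩
    · obtain ⟨t', hlen, hw⟩ := exists_shorter_word hδ ht
      exact ⟨i :: t', by simpa using hlen, by rw [wordProd_cons, wordProd_cons, hw, mul_assoc]⟩

lemma length_mul_srefl_lt {δ : D.V} (hδ : D.IsPosRoot δ) {g : D.W}
    (h : ¬D.IsPosRoot (D.act g δ)) : D.length (g * D.srefl δ) < D.length g := by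
  obtain ⟨l, hl, rfl⟩ := exists_reduced g
  obtain ⟨l', hlt, hw⟩ := exists_shorter_word hδ h
  exact (length_le hw).trans_lt (hl ▸ hlt)

lemma length_lt_of_bruhatLT {a b : D.W} (h : D.bruhatLT a b) : D.length a < D.length b := by
  have hle : ∀ {c}, D.bruhatLE a c → D.length a ≤ D.length c := fun hc => by
    induction hc with
    | refl => rfl
    | tail _ hstep ih => exact ih.trans hstep.2.le
  obtain hba | ⟨c, hac, -, hcb⟩ := h.1.cases_tail
  · exact absurd hba.symm h.2
  · exact (hle hac).trans_lt hcb

def IsMinusculeWord (pi : D.V) : List D.I → Prop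
  | [] => True
  | i :: t => D.coroot (D.simple i) (D.act (D.wordProd t) pi) = 1 ∧ IsMinusculeWord pi t

variable {pi : D.V}

/-- Along a reduced word `w = w' s_i`, the root `w' α_i` is positive, so
`π - w π = (π - w' π) + ⟨π, α_i∨⟩ w' α_i` has nonnegative height. -/
lemma htQ_sub_act_nonneg (hpi : ∀ i, 0 ≤ D.coroot (D.simple i) pi) (g : D.W) :
    0 ≤ D.htQ (pi - D.act g pi) := by
  induction hn : D.length g using Nat.strong_induction_on generalizing g with
  | _ n ih =>
  obtain ⟨l, hl, rfl⟩ := exists_reduced g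
  rcases l.eq_nil_or_concat' with rfl | ⟨l', i, rfl⟩
  · simp
  have happ : D.wordProd (l' ++ [i]) = D.wordProd l' * D.s i := by simp [wordProd_append]
  rw [happ] at hl hn ⊢
  have hl' := length_le (rfl : D.wordProd l' = _)
  simp only [List.length_append, List.length_singleton] at hl
  have hpos : D.IsPosRoot (D.act (D.wordProd l') (D.simple i)) := by
    by_contra hneg
    have := length_mul_srefl_lt (isPosRoot_simple i) hneg
    rw [← s] at this
    omega
  have hsplit : pi - D.act (D.wordProd l' * D.s i) pi
      = (pi - D.act (D.wordProd l') pi)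
        + D.coroot (D.simple i) pi • D.act (D.wordProd l') (D.simple i) := by
    simp [s, D.srefl_apply _ (D.simple_mem i)]
    abel
  rw [hsplit, map_add, map_smul, smul_eq_mul]
  exact add_nonneg (ih _ (by omega) _ rfl) (mul_nonneg (hpi i) (htQ_pos hpos).le)

lemma coroot_nonneg (hpi : ∀ i, 0 ≤ D.coroot (D.simple i) pi) {β : D.V} (hβ : D.IsPosRoot β) :
    0 ≤ D.coroot β pi := by
  have h := htQ_sub_act_nonneg hpi (D.srefl β)
  rw [D.srefl_apply β hβ.1, sub_sub_cancel, map_smul, smul_eq_mul] at h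
  exact nonneg_of_mul_nonneg_left h (htQ_pos hβ)

lemma coroot_act_int (hpi : D.IsIntegral pi) (g : D.W) {γ : D.V} (hγ : γ ∈ D.roots) :
    ∃ n : ℤ, D.coroot γ (D.act g pi) = n := by
  rw [coroot_act g hγ]
  rcases isPosRoot_or_isPosRoot_neg (D.roots_invariant g⁻¹ γ hγ) with h | h
  · exact hpi _ h
  · obtain ⟨n, hn⟩ := hpi _ h
    rw [coroot_neg (D.roots_invariant g⁻¹ γ hγ)] at hn
    exact ⟨-n, by push_cast; linarith⟩

lemma length_srefl_mul_lt (hpi : ∀ i, 0 ≤ D.coroot (D.simple i) pi) {γ : D.V}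
    (hγ : D.IsPosRoot γ) {g : D.W} (h : D.coroot γ (D.act g pi) < 0) :
    D.length (D.srefl γ * g) < D.length g := by
  have hroot := D.roots_invariant g⁻¹ γ hγ.1
  rw [coroot_act g hγ.1] at h
  have hδ : D.IsPosRoot (-D.act g⁻¹ γ) := (isPosRoot_or_isPosRoot_neg hroot).resolve_left
    fun hp => (coroot_nonneg hpi hp).not_gt h
  have := length_mul_srefl_lt hδ (by rw [map_neg, act_act_inv]; exact not_isPosRoot_neg hγ)
  rwa [srefl_neg hroot, srefl_conj g⁻¹ hγ.1, inv_inv, ← mul_assoc, ← mul_assoc, mul_inv_cancel,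
    one_mul] at this

lemma bruhatLE_srefl_mul (hpi : ∀ i, 0 ≤ D.coroot (D.simple i) pi) {γ : D.V}
    (hγ : D.IsPosRoot γ) {g : D.W} (h : D.coroot γ (D.act g pi) < 0) :
    D.bruhatLE (D.srefl γ * g) g :=
  .single ⟨⟨γ, hγ, by rw [← mul_assoc, srefl_mul_self hγ.1, one_mul]⟩,
    length_srefl_mul_lt hpi hγ h⟩

lemma htQ_sub_act_mono (hpi : ∀ i, 0 ≤ D.coroot (D.simple i) pi) {a b : D.W}
    (h : D.bruhatLE a b) : D.htQ (pi - D.act a pi) ≤ D.htQ (pi - D.act b pi) := by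
  induction h with
  | refl => rfl
  | @tail b c _ hstep ih =>
    obtain ⟨⟨γ, hγ, rfl⟩, hlen⟩ := hstep
    have hc : 0 ≤ D.coroot γ (D.act b pi) :=
      not_lt.mp fun hneg => (length_srefl_mul_lt hpi hγ hneg).not_gt hlen
    refine ih.trans ?_
    have hsplit : pi - D.act (D.srefl γ * b) pi
        = (pi - D.act b pi) + D.coroot γ (D.act b pi) • γ := by
      rw [act_mul_apply, D.srefl_apply γ hγ.1]
      abel
    rw [hsplit, map_add, map_smul, smul_eq_mul]
    nlinarith [htQ_pos hγ]

lemma isMinusculeWord_iff {l : List D.I} : IsMinusculeWord pi l ↔ ∀ k : Fin l.length,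
    D.coroot (D.simple (l.get k)) (D.act (D.wordProd (l.drop (k.val + 1))) pi) = 1 := by
  induction l with
  | nil => simp [IsMinusculeWord]
  | cons i t ih => simp [IsMinusculeWord, ih, Fin.forall_fin_succ]

lemma inv_mul_mem_stab_iff {a b : D.W} : a⁻¹ * b ∈ D.stab pi ↔ D.act b pi = D.act a pi := by
  change D.act (a⁻¹ * b) pi = pi ↔ _
  constructor <;> intro h
  · simpa using congrArg (D.act a) h
  · simp [h]

namespace IsMinusculeWord

variable {i : D.I} {t l : List D.I}

lemma act_wordProd_cons (h : IsMinusculeWord pi (i :: t)) :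
    D.act (D.wordProd (i :: t)) pi = D.act (D.wordProd t) pi - D.simple i := by
  rw [wordProd_cons, act_mul_apply, s, D.srefl_apply _ (D.simple_mem i), h.1, one_smul]

lemma coroot_act_wordProd_cons (h : IsMinusculeWord pi (i :: t)) :
    D.coroot (D.simple i) (D.act (D.wordProd (i :: t)) pi) = -1 := by
  rw [wordProd_cons, act_mul_apply, s, coroot_srefl_apply (D.simple_mem i), h.1]

section

variable (hpi : ∀ i, 0 ≤ D.coroot (D.simple i) pi)
include hpi

lemma length_s_mul_of_act_eq (h : IsMinusculeWord pi (i :: t)) {g : D.W}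
    (hg : D.act g pi = D.act (D.wordProd (i :: t)) pi) :
    D.length (D.s i * g) + 1 = D.length g ∧ D.act (D.s i * g) pi = D.act (D.wordProd t) pi := by
  have hlt := length_srefl_mul_lt hpi (isPosRoot_simple i)
    (by rw [hg, coroot_act_wordProd_cons h]; norm_num : D.coroot (D.simple i) (D.act g pi) < 0)
  refine ⟨by have := length_le_length_s_mul i g; rw [← s] at hlt; omega, ?_⟩
  rw [act_mul_apply, hg, wordProd_cons, act_mul_apply, s_s_apply]

lemma length_le (h : IsMinusculeWord pi l) {g : D.W} (hg : D.act g pi = D.act (D.wordProd l) pi) :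
    l.length ≤ D.length g := by
  induction l generalizing g with
  | nil => exact Nat.zero_le _
  | cons i t ih =>
    obtain ⟨hlen, hact⟩ := h.length_s_mul_of_act_eq hpi hg
    have := ih h.2 hact
    simp only [List.length_cons]
    omega

lemma eq_of_length_eq (h : IsMinusculeWord pi l) {g : D.W}
    (hg : D.act g pi = D.act (D.wordProd l) pi) (hlen : D.length g = l.length) :
    g = D.wordProd l := by
  induction l generalizing g with
  | nil => exact eq_one_of_length_eq_zero hlen
  | cons i t ih =>
    obtain ⟨hlen', hact⟩ := h.length_s_mul_of_act_eq hpi hg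
    have := ih h.2 hact (by simp only [List.length_cons] at hlen; omega)
    rw [wordProd_cons, ← this, ← mul_assoc, s_mul_self, one_mul]

lemma isMinRep (h : IsMinusculeWord pi l) : D.IsMinRep (D.stab pi) (D.wordProd l) :=
  fun _ hg => (WeylSetting.length_le rfl).trans (h.length_le hpi (inv_mul_mem_stab_iff.mp hg))

lemma isReduced_of_isMinRep (h : IsMinusculeWord pi l) {u : D.W}
    (hu : D.IsMinRep (D.stab pi) u) (hact : D.act u pi = D.act (D.wordProd l) pi) :
    D.IsReduced l u := by
  have h₁ := hu (D.wordProd l) (inv_mul_mem_stab_iff.mpr hact.symm)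
  have h₂ := WeylSetting.length_le (rfl : D.wordProd l = _)
  have h₃ := h.length_le hpi hact
  exact ⟨(h.eq_of_length_eq hpi hact (by omega)).symm, by omega⟩

lemma neg_one_le_coroot (h : IsMinusculeWord pi l) {β : D.V} (hβ : D.IsPosRoot β) :
    -1 ≤ D.coroot β (D.act (D.wordProd l) pi) := by
  induction l generalizing β with
  | nil => simpa using (coroot_nonneg hpi hβ).trans' (by norm_num)
  | cons i t ih =>
    by_cases hmul : ∃ q : ℚ, 0 < q ∧ β = q • D.simple i
    · obtain ⟨q, hq, rfl⟩ := hmul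
      rw [coroot_smul (D.simple_mem i) hq.ne' hβ.1, h.coroot_act_wordProd_cons]
      have := inv_le_one_of_one_le₀ (one_le_of_isPosRoot_smul_simple hβ hq)
      linarith
    · have := ih h.2 (isPosRoot_s_apply hβ hmul)
      rwa [← D.coroot_equivariant (D.s i) β hβ.1, wordProd_cons, act_mul_apply, s_s_apply]

/-- For `w = s_i w'` with `i ≠ j`, pre-dominance of `w' π` forces `α_i ⟂ α_j`, so `s_j` can be
pushed past `s_i`. -/
lemma exists_s_mul (h : IsMinusculeWord pi l) {j : D.I}
    (hj : D.coroot (D.simple j) (D.act (D.wordProd l) pi) = -1) :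
    ∃ m, IsMinusculeWord pi m ∧ D.wordProd m = D.s j * D.wordProd l := by
  induction l with
  | nil => simp at hj; linarith [coroot_nonneg hpi (isPosRoot_simple j)]
  | cons i t ih =>
    by_cases hji : j = i
    · subst hji
      exact ⟨t, h.2, by rw [wordProd_cons, ← mul_assoc, s_mul_self, one_mul]⟩
    rw [h.act_wordProd_cons, map_sub] at hj
    have hij : D.coroot (D.simple j) (D.simple i) = 0 :=
      le_antisymm (coroot_simple_nonpos (Ne.symm hji))
        (by linarith [h.2.neg_one_le_coroot hpi (isPosRoot_simple j)])
    have hji' := coroot_simple_eq_zero_symm (Ne.symm hji) hij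
    obtain ⟨m, hm, hmw⟩ := ih h.2 (by linarith)
    refine ⟨i :: m, ⟨?_, hm⟩, ?_⟩
    · rw [hmw, act_mul_apply, s, D.srefl_apply _ (D.simple_mem j), map_sub, map_smul, h.1, hji',
        smul_zero, sub_zero]
    · rw [wordProd_cons, hmw, wordProd_cons, ← mul_assoc, ← mul_assoc, s_mul_comm hij hji']

end

lemma exists_act_s (hpi : D.IsDominant pi) (h : IsMinusculeWord pi l) {j : D.I}
    (hj : D.coroot (D.simple j) (D.act (D.wordProd l) pi) ≤ 0) :
    ∃ m, IsMinusculeWord pi m ∧ D.act (D.wordProd m) pi = D.act (D.s j) (D.act (D.wordProd l) pi) ∧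
      D.bruhatLE (D.wordProd m) (D.wordProd l) := by
  obtain ⟨n, hn⟩ := coroot_act_int hpi.1 (D.wordProd l) (D.simple_mem j)
  have hlow := h.neg_one_le_coroot hpi.2 (isPosRoot_simple j)
  rw [hn] at hj hlow
  obtain rfl | rfl : n = 0 ∨ n = -1 := by
    have : n ≤ 0 := by exact_mod_cast hj
    have : -1 ≤ n := by exact_mod_cast hlow
    omega
  · refine ⟨l, h, ?_, .refl⟩
    rw [s, D.srefl_apply _ (D.simple_mem j), hn]
    simp
  · obtain ⟨m, hm, hmw⟩ := h.exists_s_mul hpi.2 (by rw [hn]; simp)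
    refine ⟨m, hm, by rw [hmw, act_mul_apply], ?_⟩
    rw [hmw]
    exact bruhatLE_srefl_mul hpi.2 (isPosRoot_simple j) (by rw [hn]; norm_num)

/-- Induction on the height of `β`. Pick `j` with `⟨α_j, β∨⟩ > 0`; unless `β = α_j`,
`β' = s_j β` is a lower positive root, and `λ + β = s_j (s_j λ + β')` is reached from `λ` by
moving to `s_j λ`, adding `β'`, and applying `s_j` again, each step going down in Bruhat order. -/
theorem exists_add_root (hpi : D.IsDominant pi) (h : IsMinusculeWord pi l) {β : D.V}
    (hβ : D.IsPosRoot β) (hlβ : D.coroot β (D.act (D.wordProd l) pi) = -1) :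
    ∃ m, IsMinusculeWord pi m ∧ D.act (D.wordProd m) pi = D.act (D.wordProd l) pi + β ∧
      D.bruhatLE (D.wordProd m) (D.wordProd l) := by
  induction hn : D.ht β using Nat.strong_induction_on generalizing β l with
  | _ n ih =>
  set lam := D.act (D.wordProd l) pi
  obtain ⟨j, hb⟩ := exists_coroot_simple_pos hβ
  have hlowj : -1 ≤ D.coroot (D.simple j) lam := h.neg_one_le_coroot hpi.2 (isPosRoot_simple j)
  by_cases hmul : ∃ q : ℚ, 0 < q ∧ β = q • D.simple j
  · obtain ⟨q, hq, rfl⟩ := hmul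
    rw [coroot_smul (D.simple_mem j) hq.ne' hβ.1] at hlβ
    have hcj : D.coroot (D.simple j) lam = -q := by
      field_simp at hlβ
      linarith
    obtain rfl : q = 1 :=
      le_antisymm (by linarith) (one_le_of_isPosRoot_smul_simple hβ hq)
    obtain ⟨m, hm, hmw, hle⟩ := h.exists_act_s hpi (j := j) (by linarith)
    refine ⟨m, hm, ?_, hle⟩
    rw [hmw, s, D.srefl_apply _ (D.simple_mem j), hcj]
    module
  have hβ' := isPosRoot_s_apply hβ hmul
  have ha : 1 ≤ D.coroot (D.simple j) β := by
    have hpos := coroot_pos_symm hβ.1 (D.simple_mem j) hb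
    obtain ⟨a, ha⟩ := D.crystallographic _ (D.simple_mem j) β hβ.1
    rw [ha] at hpos ⊢
    exact_mod_cast (show (0 : ℤ) < a by exact_mod_cast hpos)
  have hht : D.ht (D.act (D.s j) β) < n := by
    have : (D.ht (D.act (D.s j) β) : ℚ) < D.ht β := by
      rw [← htQ_eq_ht hβ', ← htQ_eq_ht hβ, s, D.srefl_apply _ (D.simple_mem j)]
      simp only [map_sub, map_smul, htQ_simple, smul_eq_mul, mul_one]
      linarith
    exact_mod_cast hn ▸ this
  have hequiv : ∀ v, D.coroot (D.act (D.s j) β) (D.act (D.s j) v) = D.coroot β v :=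
    D.coroot_equivariant _ β hβ.1
  have hcj : D.coroot (D.simple j) lam ≤ 0 := by
    have hlow : -1 ≤ D.coroot (D.act (D.s j) β) lam := h.neg_one_le_coroot hpi.2 hβ'
    rw [← s_s_apply j lam, hequiv, s, D.srefl_apply _ (D.simple_mem j), map_sub, map_smul,
      smul_eq_mul, hlβ] at hlow
    nlinarith
  obtain ⟨m₁, hm₁, hw₁, hle₁⟩ := h.exists_act_s hpi hcj
  obtain ⟨m₂, hm₂, hw₂, hle₂⟩ := ih _ hht hm₁ hβ' (by rw [hw₁, hequiv, hlβ]) rfl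
  obtain ⟨m₃, hm₃, hw₃, hle₃⟩ := hm₂.exists_act_s hpi (j := j) <| by
    rw [hw₂, hw₁, ← map_add, s, coroot_srefl_apply (D.simple_mem j), map_add]
    linarith
  refine ⟨m₃, hm₃, ?_, hle₃.trans (hle₂.trans hle₁)⟩
  rw [hw₃, hw₂, hw₁, map_add, s_s_apply, s_s_apply]

end IsMinusculeWord

variable {w u : D.W} {β : D.V}

lemma arrow_of_coroot_eq_neg_one (hpi : D.IsDominant pi) (hw : D.IsMinuscule pi w)
    (hβ : D.IsPosRoot β) (hu : D.IsMinRep (D.stab pi) u)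
    (hcoset : D.SameCoset (D.stab pi) (D.srefl β * w) u)
    (h : D.coroot β (D.act w pi) = -1) :
    D.IsMinuscule pi u ∧ D.Arrow (D.stab pi) u w β := by
  obtain ⟨l, ⟨rfl, -⟩, hl⟩ := hw
  rw [← isMinusculeWord_iff] at hl
  obtain ⟨m, hm, hmw, hle⟩ := hl.exists_add_root hpi hβ h
  have hact : D.act u pi = D.act (D.wordProd m) pi := by
    rw [inv_mul_mem_stab_iff.mp hcoset, act_mul_apply, D.srefl_apply β hβ.1, h, hmw]
    module
  have hred := hm.isReduced_of_isMinRep hpi.2 hu hact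
  refine ⟨⟨m, hred, isMinusculeWord_iff.mp hm⟩, hβ, hu, hl.isMinRep hpi.2, hcoset, ?_⟩
  rw [← hred.1]
  exact ⟨hle, fun heq => root_ne_zero hβ.1 (by simpa [heq] using hmw)⟩

lemma coroot_eq_neg_one_of_arrow (hpi : D.IsDominant pi) (hw : D.IsMinuscule pi w)
    (harr : D.Arrow (D.stab pi) u w β) : D.coroot β (D.act w pi) = -1 := by
  obtain ⟨hβ, -, hwmin, hcoset, hlt⟩ := harr
  obtain ⟨l, ⟨rfl, -⟩, hl⟩ := hw
  rw [← isMinusculeWord_iff] at hl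
  obtain ⟨n, hn⟩ := coroot_act_int hpi.1 (D.wordProd l) hβ.1
  have hact : D.act u pi = D.act (D.wordProd l) pi - (n : ℚ) • β := by
    rw [inv_mul_mem_stab_iff.mp hcoset, act_mul_apply, D.srefl_apply β hβ.1, hn]
  have hlow : -1 ≤ n := by exact_mod_cast hn ▸ hl.neg_one_le_coroot hpi.2 hβ
  have hhigh : n ≤ 0 := by
    have hmono := htQ_sub_act_mono hpi.2 hlt.1
    rw [hact, sub_sub_eq_add_sub, add_sub_right_comm, map_add, map_smul, smul_eq_mul] at hmono
    have : (n : ℚ) ≤ 0 := nonpos_of_mul_nonpos_left (by linarith) (htQ_pos hβ)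
    exact_mod_cast this
  have hne : n ≠ 0 := by
    rintro rfl
    refine (hwmin u (inv_mul_mem_stab_iff.mpr ?_)).not_gt (length_lt_of_bruhatLT hlt)
    simpa using hact
  rw [hn]
  exact_mod_cast (by omega : n = -1)

end WeylSetting

open WeylSetting

/-- Let `π` be dominant integral, `w` a `π`-minuscule element, `λ = w(π)`, and
for a positive root `β` let `u ∈ W^π` be the minimal-length representative of
`s_β w W_π`. Then (a) `λ →β s_β(λ)` (i.e. `⟨λ, β∨⟩ = -1`) iff `u →β w`; and
(b) if `u →β w` then `u` is also `π`-minuscule. -/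
theorem minuscule_arrow_iff
    (D : WeylSetting) (pi : D.V) (hpi : D.IsDominant pi)
    (w : D.W) (hw : D.IsMinuscule pi w) (β : D.V) (hβ : D.IsPosRoot β)
    (u : D.W) (hu : D.IsMinRep (D.stab pi) u)
    (hcoset : D.SameCoset (D.stab pi) (D.srefl β * w) u) :
    (D.coroot β (D.act w pi) = -1 ↔ D.Arrow (D.stab pi) u w β) ∧
    (D.Arrow (D.stab pi) u w β → D.IsMinuscule pi u) :=
  ⟨⟨fun h => (arrow_of_coroot_eq_neg_one hpi hw hβ hu hcoset h).2,
      coroot_eq_neg_one_of_arrow hpi hw⟩,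
    fun harr => (arrow_of_coroot_eq_neg_one hpi hw hβ hu hcoset
      (coroot_eq_neg_one_of_arrow hpi hw harr)).1⟩
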